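/- arXiv:2006.15642 — 2 statements merged into one kernel-verified Lean document; each statement's English description precedes it below -/
import Mathlib

section
/- Let m ≥ 2 and let T ∈ B(H) be an m-isometry satisfying the (m-1)-kernel condition. Then T^{n-1}(Ker(T*)) ⊆ Ker((T*)^n) for every n ∈ ℕ. -/
open ContinuousLinearMap MeasureTheory

noncomputable section

variable {H : Type*} [NormedAddCommGroup H] [InnerProductSpace ℂ H] [CompleteSpace H]

/-- `T^{[k]} = (T*)^k T^k`. -/
def opBr (T : H →L[ℂ] H) (k : ℕ) : H →L[ℂ] H :=
  ((ContinuousLinearMap.adjoint T) ^ k).comp (T ^ k)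

/-- `T` is an `m`-isometry: `∑_{p=0}^m (-1)^p (m choose p) T^{[p]} = 0`. -/
def IsMIsometry (T : H →L[ℂ] H) (m : ℕ) : Prop :=
  ∑ p ∈ Finset.range (m + 1), ((-1 : ℂ) ^ p * (m.choose p : ℂ)) • opBr T p = 0

/-- `T` satisfies the `k`-kernel condition: `Ker T*` is invariant under `T^{[n]}`
for every `n ∈ {1, …, k}`. -/
def KernelCondition (T : H →L[ℂ] H) (k : ℕ) : Prop :=
  ∀ n, 1 ≤ n → n ≤ k →
    ∀ x ∈ LinearMap.ker ((ContinuousLinearMap.adjoint T : H →L[ℂ] H) : H →ₗ[ℂ] H),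
      opBr T n x ∈ LinearMap.ker ((ContinuousLinearMap.adjoint T : H →L[ℂ] H) : H →ₗ[ℂ] H)

/-!
Applying the `m`-isometry identity to `T^j x` and then `(T*)^j` shows that `k ↦ T^{[k]} x`
satisfies a linear recurrence of order `m` with leading coefficient `(-1)^m`. So if `x ∈ Ker T*`,
the kernel condition puts the first `m` terms in `Ker T*`, the recurrence puts all of them there,
and `(T*)^n T^{n-1} x = T* (T^{[n-1]} x) = 0`.
-/

theorem Submodule.mem_of_linearRecurrence {K M : Type*} [DivisionRing K] [AddCommGroup M]
    [Module K M] (S : Submodule K M) (v : ℕ → M) (c : ℕ → K) (m : ℕ) (hc : c m ≠ 0)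
    (hrec : ∀ j, ∑ p ∈ Finset.range (m + 1), c p • v (p + j) = 0)
    (hinit : ∀ k < m, v k ∈ S) (k : ℕ) : v k ∈ S := by
  induction k using Nat.strong_induction_on with
  | _ k ih =>
    rcases lt_or_ge k m with hk | hk
    · exact hinit k hk
    obtain ⟨j, rfl⟩ := Nat.exists_eq_add_of_le hk
    have hlead : c m • v (m + j) = -∑ p ∈ Finset.range m, c p • v (p + j) := by
      rw [eq_neg_iff_add_eq_zero, add_comm, ← Finset.sum_range_succ]
      exact hrec j
    have hmem : c m • v (m + j) ∈ S := by
      rw [hlead]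
      exact S.neg_mem <| S.sum_mem fun p hp =>
        S.smul_mem _ <| ih _ (by have := Finset.mem_range.mp hp; omega)
    simpa [smul_smul, inv_mul_cancel₀ hc] using S.smul_mem (c m)⁻¹ hmem

lemma opBr_add (T : H →L[ℂ] H) (p j : ℕ) :
    opBr T (p + j) = adjoint T ^ j * opBr T p * T ^ j := by
  rw [opBr, opBr, ← mul_def, ← mul_def, pow_add T, add_comm p j, pow_add (adjoint T)]
  simp only [mul_assoc]

lemma IsMIsometry.sum_opBr_add {T : H →L[ℂ] H} {m : ℕ} (hT : IsMIsometry T m) (j : ℕ) :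
    ∑ p ∈ Finset.range (m + 1), ((-1 : ℂ) ^ p * (m.choose p : ℂ)) • opBr T (p + j) = 0 := by
  unfold IsMIsometry at hT
  calc _ = adjoint T ^ j * (∑ p ∈ Finset.range (m + 1),
          ((-1 : ℂ) ^ p * (m.choose p : ℂ)) • opBr T p) * T ^ j := by
        simp only [opBr_add, Finset.mul_sum, Finset.sum_mul, mul_smul_comm, smul_mul_assoc]
    _ = 0 := by rw [hT, mul_zero, zero_mul]

lemma IsMIsometry.opBr_mem_ker_adjoint {T : H →L[ℂ] H} {m : ℕ} (hT : IsMIsometry T m)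
    (hkc : KernelCondition T (m - 1)) {x : H}
    (hx : x ∈ LinearMap.ker ((adjoint T : H →L[ℂ] H) : H →ₗ[ℂ] H)) (k : ℕ) :
    opBr T k x ∈ LinearMap.ker ((adjoint T : H →L[ℂ] H) : H →ₗ[ℂ] H) := by
  refine Submodule.mem_of_linearRecurrence _ (fun k => opBr T k x)
    (fun p => (-1 : ℂ) ^ p * (m.choose p : ℂ)) m (by simp) (fun j => ?_) (fun k hk => ?_) k
  · simpa using congrArg (· x) (hT.sum_opBr_add j)
  · rcases Nat.eq_zero_or_pos k with rfl | hk0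
    · simpa [opBr] using hx
    · exact hkc k hk0 (by omega) x hx

theorem mIsometry_image_ker_subset_general (T : H →L[ℂ] H) (m : ℕ)
    (hT : IsMIsometry T m) (hkc : KernelCondition T (m - 1)) (n : ℕ) (hn : 1 ≤ n) :
    (T ^ (n - 1)) '' (LinearMap.ker ((ContinuousLinearMap.adjoint T : H →L[ℂ] H) : H →ₗ[ℂ] H) : Set H) ⊆
      (LinearMap.ker (((ContinuousLinearMap.adjoint T) ^ n : H →L[ℂ] H) : H →ₗ[ℂ] H) : Set H) := by
  rintro _ ⟨x, hx, rfl⟩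
  obtain ⟨k, rfl⟩ := Nat.exists_eq_add_of_le' hn
  have hker := hT.opBr_mem_ker_adjoint hkc hx k
  rw [SetLike.mem_coe, LinearMap.mem_ker, Nat.add_sub_cancel, pow_succ']
  exact hker

/-- Proposition 2.2. If `m ≥ 2` and `T` is an `m`-isometry satisfying the
`(m-1)`-kernel condition, then `T^{n-1}(Ker T*) ⊆ Ker (T*)^n` for every `n ∈ ℕ`. -/
theorem mIsometry_image_ker_subset (T : H →L[ℂ] H) (m : ℕ) (hm : 2 ≤ m)
    (hT : IsMIsometry T m) (hkc : KernelCondition T (m - 1)) (n : ℕ) (hn : 1 ≤ n) :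
    (T ^ (n - 1)) '' (LinearMap.ker ((ContinuousLinearMap.adjoint T : H →L[ℂ] H) : H →ₗ[ℂ] H) : Set H) ⊆
      (LinearMap.ker (((ContinuousLinearMap.adjoint T) ^ n : H →L[ℂ] H) : H →ₗ[ℂ] H) : Set H) :=
  mIsometry_image_ker_subset_general T m hT hkc n hn
end
end

section
/- Let (X, A, μ) be a discrete measure space, φ : X → X a map such that the composition operator C_φ is bounded on L²(μ) and left-invertible, and let k ∈ ℕ. Then C_φ satisfies the k-kernel condition if and only if the Radon–Nikodym derivative h is constant on the preimage φ^{-i}({x}) for every i ∈ {1,…,k} and every x ∈ X. -/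
open ContinuousLinearMap MeasureTheory

noncomputable section

variable {H : Type*} [NormedAddCommGroup H] [InnerProductSpace ℂ H] [CompleteSpace H]

/-! On a discrete space everything can be computed pointwise. The vector `δ_y = μ{y}⁻¹ 𝟙_{y}`
represents evaluation at `y`, so `(C_φⁿ)* C_φⁿ` is multiplication by `h_{φⁿ}(y) = μ(φ⁻ⁿ{y})/μ{y}`,
and `g ∈ Ker C_φ*` says that `g` integrates to zero over every fibre of `φ`. A multiplication
operator therefore preserves `Ker C_φ*` iff its symbol is constant on the fibres of `φ` (for the
forward direction, test against `δ_a - δ_b` with `φ a = φ b`), and the `k`-kernel condition says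
that `h_{φⁿ}` is constant on the fibres of `φ` for `n ≤ k`.

Summing over `φ⁻ⁿ{a}` gives `h_{φⁿ⁺¹}(a) = h_φ(u) h_{φⁿ}(a)` whenever `h_φ` is constant on
`φ⁻ⁿ{a} ∋ u`. Left-invertibility makes `φ` surjective, so these fibres are nonempty, and an
induction on `k` converts one family of conditions into the other. -/

open Function Set
open scoped ENNReal InnerProductSpace

namespace DiscreteCompositionOperator

variable {X : Type*} [MeasurableSpace X] {μ : Measure X}

/-- The Radon–Nikodym derivative of `μ ∘ ψ⁻¹` with respect to `μ` on a discrete space; the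
paper's `h` is `pushforwardDensity μ φ`. -/
def pushforwardDensity (μ : Measure X) (ψ : X → X) (x : X) : ℝ≥0∞ :=
  μ (ψ ⁻¹' {x}) / μ {x}

lemma pushforwardDensity_mul_measure (hμ0 : ∀ x, μ {x} ≠ 0) (hμtop : ∀ x, μ {x} ≠ ⊤)
    (ψ : X → X) (x : X) :
    pushforwardDensity μ ψ x * μ {x} = μ (ψ ⁻¹' {x}) :=
  ENNReal.div_mul_cancel (hμ0 x) (hμtop x)

lemma pushforwardDensity_iterate_zero (hμ0 : ∀ x, μ {x} ≠ 0) (hμtop : ∀ x, μ {x} ≠ ⊤)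
    (φ : X → X) (x : X) : pushforwardDensity μ φ^[0] x = 1 :=
  ENNReal.div_self (hμ0 x) (hμtop x)

lemma factorsThrough_pushforwardDensity_iterate_zero (hμ0 : ∀ x, μ {x} ≠ 0)
    (hμtop : ∀ x, μ {x} ≠ ⊤) (φ : X → X) : (pushforwardDensity μ φ^[0]).FactorsThrough φ :=
  fun a b _ => by
    rw [pushforwardDensity_iterate_zero hμ0 hμtop, pushforwardDensity_iterate_zero hμ0 hμtop]

lemma forall_one_le_le_iff {p : ℕ → Prop} (h0 : p 0) {k : ℕ} :
    (∀ n, 1 ≤ n → n ≤ k → p n) ↔ ∀ n ≤ k, p n :=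
  ⟨fun h n hn => n.eq_zero_or_pos.elim (fun hn0 => hn0 ▸ h0) (fun hpos => h n hpos hn),
    fun h n _ hn => h n hn⟩

section Density

variable [MeasurableSingletonClass X] [Countable X]
  (hμ0 : ∀ x, μ {x} ≠ 0) (hμtop : ∀ x, μ {x} ≠ ⊤)
include hμ0 hμtop

lemma measure_preimage_iterate_succ {φ : X → X} {n : ℕ} {a : X} {ρ : ℝ≥0∞}
    (hρ : ∀ u, φ^[n] u = a → pushforwardDensity μ φ u = ρ) :
    μ (φ^[n + 1] ⁻¹' {a}) = ρ * μ (φ^[n] ⁻¹' {a}) := by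
  have htsum (s : Set X) (f : X → X) : ∑' u : s, μ (f ⁻¹' {(u : X)}) = μ (f ⁻¹' s) :=
    tsum_measure_preimage_singleton s.to_countable fun _ _ => (to_countable _).measurableSet
  calc μ (φ^[n + 1] ⁻¹' {a}) = ∑' u : φ^[n] ⁻¹' {a}, μ (φ ⁻¹' {(u : X)}) := by
        rw [htsum, iterate_succ, preimage_comp]
    _ = ∑' u : φ^[n] ⁻¹' {a}, ρ * μ {(u : X)} := tsum_congr fun u => by
        rw [← hρ u u.2, pushforwardDensity_mul_measure hμ0 hμtop]
    _ = ρ * μ (φ^[n] ⁻¹' {a}) := by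
        rw [ENNReal.tsum_mul_left]
        simpa using congrArg (ρ * ·) (htsum (φ^[n] ⁻¹' {a}) id)

lemma pushforwardDensity_iterate_succ {φ : X → X} {n : ℕ}
    (hP : (pushforwardDensity μ φ).FactorsThrough φ^[n]) {u a : X} (hu : φ^[n] u = a) :
    pushforwardDensity μ φ^[n + 1] a = pushforwardDensity μ φ u * pushforwardDensity μ φ^[n] a := by
  rw [pushforwardDensity, measure_preimage_iterate_succ hμ0 hμtop fun v hv => hP (hv.trans hu.symm),
    mul_div_assoc]
  rfl

lemma factorsThrough_pushforwardDensity_iterate_succ_iff {φ : X → X} (hφ : Surjective φ) {n : ℕ}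
    (hfin : ∀ y, μ (φ^[n] ⁻¹' {y}) ≠ ⊤)
    (hP : (pushforwardDensity μ φ).FactorsThrough φ^[n])
    (hQ : (pushforwardDensity μ φ^[n]).FactorsThrough φ) :
    (pushforwardDensity μ φ^[n + 1]).FactorsThrough φ ↔
      (pushforwardDensity μ φ).FactorsThrough φ^[n + 1] := by
  constructor
  · intro hQ' y z hyz
    rw [iterate_succ_apply', iterate_succ_apply'] at hyz
    have hdens := hQ' hyz
    rw [pushforwardDensity_iterate_succ hμ0 hμtop hP rfl,
      pushforwardDensity_iterate_succ hμ0 hμtop hP rfl, hQ hyz] at hdens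
    have hpos : μ (φ^[n] ⁻¹' {φ^[n] z}) ≠ 0 := fun h =>
      hμ0 z (measure_mono_null (singleton_subset_iff.2 (show z ∈ φ^[n] ⁻¹' {φ^[n] z} from rfl)) h)
    exact (ENNReal.mul_left_inj (ENNReal.div_pos_iff.2 ⟨hpos, hμtop _⟩).ne'
      (ENNReal.div_ne_top (hfin _) (hμ0 _))).1 hdens
  · intro hP' a b hab
    obtain ⟨u, hu⟩ := hφ.iterate n a
    obtain ⟨v, hv⟩ := hφ.iterate n b
    have huv : φ^[n + 1] u = φ^[n + 1] v := by
      rw [iterate_succ_apply', iterate_succ_apply', hu, hv, hab]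
    rw [pushforwardDensity_iterate_succ hμ0 hμtop hP hu,
      pushforwardDensity_iterate_succ hμ0 hμtop hP hv, hQ hab, hP' huv]

lemma forall_factorsThrough_pushforwardDensity_iterate_iff {φ : X → X} (hφ : Surjective φ)
    (hfin : ∀ n y, μ (φ^[n] ⁻¹' {y}) ≠ ⊤) (k : ℕ) :
    (∀ n ≤ k, (pushforwardDensity μ φ^[n]).FactorsThrough φ) ↔
      ∀ i ≤ k, (pushforwardDensity μ φ).FactorsThrough φ^[i] := by
  induction k with
  | zero =>
    simp only [Nat.le_zero, forall_eq]
    exact iff_of_true (factorsThrough_pushforwardDensity_iterate_zero hμ0 hμtop φ)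
      (injective_id.factorsThrough _)
  | succ k ih =>
    simp only [Nat.le_succ_iff_eq_or_le, or_imp, forall_and, forall_eq]
    constructor
    · rintro ⟨hQk, hQ⟩
      have hP := ih.1 hQ
      exact ⟨(factorsThrough_pushforwardDensity_iterate_succ_iff hμ0 hμtop hφ (hfin k)
        (hP k le_rfl) (hQ k le_rfl)).1 hQk, hP⟩
    · rintro ⟨hPk, hP⟩
      have hQ := ih.2 hP
      exact ⟨(factorsThrough_pushforwardDensity_iterate_succ_iff hμ0 hμtop hφ (hfin k)
        (hP k le_rfl) (hQ k le_rfl)).2 hPk, hQ⟩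

end Density

lemma measureReal_singleton_ne_zero (hμ0 : ∀ x, μ {x} ≠ 0) (hμtop : ∀ x, μ {x} ≠ ⊤) (y : X) :
    μ.real {y} ≠ 0 :=
  ENNReal.toReal_ne_zero.2 ⟨hμ0 y, hμtop y⟩

lemma opBr_eq_adjoint_pow_comp_pow (T : H →L[ℂ] H) (n : ℕ) :
    opBr T n = adjoint (T ^ n) ∘L T ^ n := by
  rw [opBr, ← star_eq_adjoint, ← star_pow, star_eq_adjoint]

lemma pow_apply_eq_iterate {ψ : X → X} {T : Lp ℂ 2 μ →L[ℂ] Lp ℂ 2 μ}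
    (hT : ∀ f x, T f x = f (ψ x)) (n : ℕ) (f : Lp ℂ 2 μ) (x : X) :
    (T ^ n) f x = f (ψ^[n] x) := by
  induction n generalizing x with
  | zero => rfl
  | succ n ih => rw [pow_succ', mul_apply_eq_comp, hT, ih, iterate_succ_apply]

section Discrete

variable (hμ0 : ∀ x, μ {x} ≠ 0)
include hμ0

lemma apply_eq_of_ae_eq {α : Type*} {f g : X → α} (h : f =ᵐ[μ] g) (x : X) : f x = g x := by
  by_contra hne
  exact hμ0 x (measure_mono_null (singleton_subset_iff.2 hne) (ae_iff.1 h))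

lemma Lp_eq_zero_iff_forall {E : Type*} [NormedAddCommGroup E] {p : ℝ≥0∞} {f : Lp E p μ} :
    f = 0 ↔ ∀ x, f x = 0 := by
  refine ⟨?_, fun h => Lp.ext ?_⟩
  · rintro rfl x
    exact apply_eq_of_ae_eq hμ0 (Lp.coeFn_zero E p μ) x
  · filter_upwards [Lp.coeFn_zero E p μ] with x hx
    rw [hx, h x, Pi.zero_apply]

variable [MeasurableSingletonClass X] (hμtop : ∀ x, μ {x} ≠ ⊤)
include hμtop

def evalVector (y : X) : Lp ℂ 2 μ :=
  indicatorConstLp 2 (measurableSet_singleton y) (hμtop y) ((μ.real {y})⁻¹ : ℂ)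

lemma evalVector_apply (y x : X) :
    evalVector hμtop y x = ({y} : Set X).indicator (fun _ => ((μ.real {y})⁻¹ : ℂ)) x :=
  apply_eq_of_ae_eq hμ0 indicatorConstLp_coeFn x

lemma inner_evalVector_left (y : X) (f : Lp ℂ 2 μ) : ⟪evalVector hμtop y, f⟫_ℂ = f y := by
  rw [evalVector, L2.inner_indicatorConstLp_eq_inner_setIntegral, integral_singleton,
    Complex.real_smul, RCLike.inner_apply, map_inv₀, Complex.conj_ofReal]
  field_simp [measureReal_singleton_ne_zero hμ0 hμtop y]

lemma inner_evalVector_right (y : X) (f : Lp ℂ 2 μ) :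
    ⟪f, evalVector hμtop y⟫_ℂ = starRingEnd ℂ (f y) := by
  rw [← inner_conj_symm, inner_evalVector_left hμ0 hμtop]

lemma mem_ker_adjoint_iff (T : Lp ℂ 2 μ →L[ℂ] Lp ℂ 2 μ) (g : Lp ℂ 2 μ) :
    g ∈ LinearMap.ker ((adjoint T : Lp ℂ 2 μ →L[ℂ] Lp ℂ 2 μ) : Lp ℂ 2 μ →ₗ[ℂ] Lp ℂ 2 μ) ↔
      ∀ y, ⟪T (evalVector hμtop y), g⟫_ℂ = 0 := by
  simp only [LinearMap.mem_ker, coe_coe, Lp_eq_zero_iff_forall hμ0, ← adjoint_inner_right,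
    inner_evalVector_left hμ0 hμtop]

lemma apply_evalVector_of_mul {M : Lp ℂ 2 μ →L[ℂ] Lp ℂ 2 μ} {m : X → ℂ}
    (hM : ∀ g x, M g x = m x * g x) (z : X) :
    M (evalVector hμtop z) = m z • evalVector hμtop z := by
  refine Lp.ext ?_
  filter_upwards [Lp.coeFn_smul (m z) (evalVector hμtop z)] with x hx
  rw [hx, hM, Pi.smul_apply, smul_eq_mul, evalVector_apply hμ0 hμtop]
  by_cases hxz : x = z
  · rw [hxz]
  · rw [indicator_of_notMem (show x ∉ ({z} : Set X) from hxz), mul_zero, mul_zero]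

section Composition

variable {ψ : X → X} {T : Lp ℂ 2 μ →L[ℂ] Lp ℂ 2 μ} (hT : ∀ f x, T f x = f (ψ x))
include hT

lemma apply_evalVector_eq_indicator (y x : X) :
    T (evalVector hμtop y) x = (ψ ⁻¹' {y}).indicator (fun _ => ((μ.real {y})⁻¹ : ℂ)) x := by
  rw [hT, evalVector_apply hμ0 hμtop]
  rfl

lemma inner_apply_evalVector_evalVector (y z : X) :
    ⟪T (evalVector hμtop y), evalVector hμtop z⟫_ℂ = starRingEnd ℂ (evalVector hμtop y (ψ z)) := by
  rw [inner_evalVector_right hμ0 hμtop, hT]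

lemma surjective_of_comp_eq_one {S : Lp ℂ 2 μ →L[ℂ] Lp ℂ 2 μ} (hS : S ∘L T = 1) :
    Surjective ψ := by
  intro y
  by_contra! hy
  have hTδ : T (evalVector hμtop y) = 0 := (Lp_eq_zero_iff_forall hμ0).2 fun x => by
    rw [apply_evalVector_eq_indicator hμ0 hμtop hT,
      indicator_of_notMem (show x ∉ ψ ⁻¹' {y} from hy x)]
  have hδ : evalVector hμtop y = 0 := by
    simpa [hTδ] using (DFunLike.congr_fun hS (evalVector hμtop y)).symm
  have hself := inner_evalVector_left hμ0 hμtop y (evalVector hμtop y)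
  rw [evalVector_apply hμ0 hμtop, indicator_of_mem (mem_singleton y), hδ, inner_zero_left] at hself
  exact inv_ne_zero (Complex.ofReal_ne_zero.2 (measureReal_singleton_ne_zero hμ0 hμtop y))
    hself.symm

variable [Countable X]

lemma measure_preimage_singleton_ne_top (y : X) : μ (ψ ⁻¹' {y}) ≠ ⊤ := by
  have hmeas : MeasurableSet (ψ ⁻¹' {y}) := (to_countable _).measurableSet
  have hmem := (Lp.memLp (T (evalVector hμtop y))).ae_eq
    (.of_forall (apply_evalVector_eq_indicator hμ0 hμtop hT y))
  rw [memLp_indicator_iff_restrict hmeas, memLp_const_iff two_ne_zero ENNReal.ofNat_ne_top,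
    Measure.restrict_apply_univ] at hmem
  refine (hmem.resolve_left ?_).ne
  simpa using measureReal_singleton_ne_zero hμ0 hμtop y

lemma inner_apply_evalVector (y : X) (g : Lp ℂ 2 μ) :
    ⟪T (evalVector hμtop y), g⟫_ℂ = (μ.real {y})⁻¹ • ∫ x in ψ ⁻¹' {y}, g x ∂μ := by
  have hmeas : MeasurableSet (ψ ⁻¹' {y}) := (to_countable _).measurableSet
  have hfin := measure_preimage_singleton_ne_top hμ0 hμtop hT y
  have hT_eval : T (evalVector hμtop y) =
      indicatorConstLp 2 hmeas hfin ((μ.real {y})⁻¹ : ℂ) := by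
    refine Lp.ext ?_
    filter_upwards [indicatorConstLp_coeFn (p := 2) (c := ((μ.real {y})⁻¹ : ℂ)) (hs := hmeas)
      (hμs := hfin)] with x hx
    rw [hx, apply_evalVector_eq_indicator hμ0 hμtop hT]
  rw [hT_eval, L2.inner_indicatorConstLp_eq_inner_setIntegral, RCLike.inner_apply,
    map_inv₀, Complex.conj_ofReal, Complex.real_smul, Complex.ofReal_inv, mul_comm]

lemma adjoint_apply_self_apply (y : X) (g : Lp ℂ 2 μ) :
    adjoint T (T g) y = (pushforwardDensity μ ψ y).toReal • g y := by
  have hmeas : MeasurableSet (ψ ⁻¹' {y}) := (to_countable _).measurableSet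
  rw [← inner_evalVector_left hμ0 hμtop, adjoint_inner_right, inner_apply_evalVector hμ0 hμtop hT,
    setIntegral_congr_fun hmeas (g := fun _ => g y) fun x hx => by rw [hT, mem_preimage.1 hx],
    setIntegral_const, smul_smul, inv_mul_eq_div, pushforwardDensity, ENNReal.toReal_div]
  rfl

lemma preserves_ker_adjoint_iff_factorsThrough {M : Lp ℂ 2 μ →L[ℂ] Lp ℂ 2 μ} {m : X → ℂ}
    (hM : ∀ g x, M g x = m x * g x) :
    (∀ g ∈ LinearMap.ker ((adjoint T : Lp ℂ 2 μ →L[ℂ] Lp ℂ 2 μ) : Lp ℂ 2 μ →ₗ[ℂ] Lp ℂ 2 μ),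
      M g ∈ LinearMap.ker ((adjoint T : Lp ℂ 2 μ →L[ℂ] Lp ℂ 2 μ) : Lp ℂ 2 μ →ₗ[ℂ] Lp ℂ 2 μ)) ↔
      m.FactorsThrough ψ := by
  simp only [mem_ker_adjoint_iff hμ0 hμtop]
  constructor
  · intro h a b hab
    have hker := h (evalVector hμtop a - evalVector hμtop b) fun y => by
      rw [inner_sub_right, inner_apply_evalVector_evalVector hμ0 hμtop hT,
        inner_apply_evalVector_evalVector hμ0 hμtop hT, hab, sub_self]
    have hψa := hker (ψ a)
    rw [map_sub, apply_evalVector_of_mul hμ0 hμtop hM, apply_evalVector_of_mul hμ0 hμtop hM,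
      inner_sub_right, inner_smul_right, inner_smul_right,
      inner_apply_evalVector_evalVector hμ0 hμtop hT,
      inner_apply_evalVector_evalVector hμ0 hμtop hT, ← hab, ← sub_mul, mul_eq_zero, sub_eq_zero,
      evalVector_apply hμ0 hμtop, indicator_of_mem (mem_singleton _), map_inv₀,
      Complex.conj_ofReal] at hψa
    exact hψa.resolve_right
      (inv_ne_zero (Complex.ofReal_ne_zero.2 (measureReal_singleton_ne_zero hμ0 hμtop _)))
  · intro hm g hg y
    have hmeas : MeasurableSet (ψ ⁻¹' {y}) := (to_countable _).measurableSet
    have hfibre : ∫ x in ψ ⁻¹' {y}, M g x ∂μ = ∫ x in ψ ⁻¹' {y}, extend ψ m 0 y * g x ∂μ :=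
      setIntegral_congr_fun hmeas fun x hx => by
        rw [hM, ← hm.extend_apply 0, mem_preimage.1 hx]
    have hgy := hg y
    rw [inner_apply_evalVector hμ0 hμtop hT] at hgy ⊢
    rw [hfibre, integral_const_mul, ← mul_smul_comm, hgy, mul_zero]

end Composition

lemma kernelCondition_iff_factorsThrough [Countable X] {φ : X → X}
    {C : Lp ℂ 2 μ →L[ℂ] Lp ℂ 2 μ} (hC : ∀ f x, C f x = f (φ x)) (k : ℕ) :
    KernelCondition C k ↔
      ∀ n, 1 ≤ n → n ≤ k → (pushforwardDensity μ φ^[n]).FactorsThrough φ := by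
  refine forall₃_congr fun n _ _ => ?_
  have hCn := pow_apply_eq_iterate hC n
  have hfin (x : X) : pushforwardDensity μ φ^[n] x ≠ ⊤ :=
    ENNReal.div_ne_top (measure_preimage_singleton_ne_top hμ0 hμtop hCn x) (hμ0 x)
  rw [preserves_ker_adjoint_iff_factorsThrough hμ0 hμtop hC
    (m := fun x => ((pushforwardDensity μ φ^[n] x).toReal : ℂ)) fun g x => by
      rw [opBr_eq_adjoint_pow_comp_pow, ContinuousLinearMap.comp_apply,
        adjoint_apply_self_apply hμ0 hμtop hCn, Complex.real_smul]]
  simp only [FactorsThrough, Complex.ofReal_inj, ENNReal.toReal_eq_toReal_iff' (hfin _) (hfin _)]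

end Discrete

end DiscreteCompositionOperator

open DiscreteCompositionOperator

theorem compositionOperator_kernelCondition_iff_general
    {X : Type*} [MeasurableSpace X] [MeasurableSingletonClass X] [Countable X]
    (μ : Measure X) (hμ : ∀ x : X, 0 < μ {x} ∧ μ {x} < ⊤)
    (φ : X → X)
    (C S : Lp ℂ 2 μ →L[ℂ] Lp ℂ 2 μ)
    (hC : ∀ f : Lp ℂ 2 μ, (C f : X → ℂ) =ᵐ[μ] fun x => f (φ x))
    (hS : S.comp C = 1) (k : ℕ) :
    KernelCondition C k ↔
      ∀ i, 1 ≤ i → i ≤ k → ∀ x y z : X, φ^[i] y = x → φ^[i] z = x →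
        μ (φ ⁻¹' {y}) / μ {y} = μ (φ ⁻¹' {z}) / μ {z} := by
  have hμ0 (x : X) : μ {x} ≠ 0 := (hμ x).1.ne'
  have hμtop (x : X) : μ {x} ≠ ⊤ := (hμ x).2.ne
  have hCφ (f : Lp ℂ 2 μ) : ∀ x, C f x = f (φ x) := apply_eq_of_ae_eq hμ0 (hC f)
  have hfin (n : ℕ) := measure_preimage_singleton_ne_top hμ0 hμtop (pow_apply_eq_iterate hCφ n)
  rw [kernelCondition_iff_factorsThrough hμ0 hμtop hCφ,
    forall_one_le_le_iff (factorsThrough_pushforwardDensity_iterate_zero hμ0 hμtop φ),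
    forall_factorsThrough_pushforwardDensity_iterate_iff hμ0 hμtop
      (surjective_of_comp_eq_one hμ0 hμtop hCφ hS) hfin,
    ← forall_one_le_le_iff (injective_id.factorsThrough _)]
  exact forall₃_congr fun i _ _ =>
    ⟨fun h _ y z hy hz => h (hy.trans hz.symm), fun h y z hyz => h _ y z hyz rfl⟩

/-- Theorem 2.5. On a discrete measure space, a bounded left-invertible
composition operator `C_φ` on `L²(μ)` satisfies the `k`-kernel condition iff the Radon–Nikodym
derivative `h(y) = μ(φ⁻¹({y}))/μ({y})` is constant on the preimages `φ^{-i}({x})` for all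
`i ∈ {1, …, k}` and every `x ∈ X`. -/
theorem compositionOperator_kernelCondition_iff
    {X : Type*} [MeasurableSpace X] [MeasurableSingletonClass X] [Countable X] [Infinite X]
    (μ : Measure X) (hμ : ∀ x : X, 0 < μ {x} ∧ μ {x} < ⊤)
    (φ : X → X)
    (C S : Lp ℂ 2 μ →L[ℂ] Lp ℂ 2 μ)
    (hC : ∀ f : Lp ℂ 2 μ, (C f : X → ℂ) =ᵐ[μ] fun x => f (φ x))
    (hS : S.comp C = 1) (k : ℕ) (hk : 1 ≤ k) :
    KernelCondition C k ↔
      ∀ i, 1 ≤ i → i ≤ k → ∀ x y z : X, φ^[i] y = x → φ^[i] z = x →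
        μ (φ ⁻¹' {y}) / μ {y} = μ (φ ⁻¹' {z}) / μ {z} :=
  compositionOperator_kernelCondition_iff_general μ hμ φ C S hC hS k
end
end
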